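/- arXiv:2305.05966 — 2 statements merged into one kernel-verified Lean document; each statement's English description precedes it below -/
import Mathlib

section
/- Let A be an n×n symmetric matrix with integer entries, let u ≠ v be indices with A(u,u) = 0, and suppose the u-th row of A has exactly one nonzero off-diagonal entry, namely A(u,v) = A(v,u) = 1. Then det A = − det A'', where A'' is the (n−2)×(n−2) matrix obtained from A by deleting both the rows and the columns indexed by u and v. -/
open Matrix

/-- Deleting a 0-weighted degree-one vertex `u` and its unique neighbor `v`
(Neumann blow-down of type (c)) flips the sign of the determinant of the
weighted adjacency matrix. -/
theorem stmt_0 (n : ℕ) (A : Matrix (Fin n) (Fin n) ℤ) (hA : A.IsSymm)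
    (u v : Fin n) (huv : u ≠ v) (huu : A u u = 0)
    (hrow : ∀ j : Fin n, j ≠ u → (A u j ≠ 0 ↔ j = v))
    (hAuv : A u v = 1) (hAvu : A v u = 1) :
    A.det = - Matrix.det
      (A.submatrix (fun i : {i : Fin n // i ≠ u ∧ i ≠ v} => (i : Fin n))
        (fun j : {j : Fin n // j ≠ u ∧ j ≠ v} => (j : Fin n))) := by
  classical
  have hA0 : ∀ j : Fin n, j ≠ u → j ≠ v → A u j = 0 := by
    intro j hju hjv
    by_contra h
    exact hjv ((hrow j hju).mp h)
  set S := {i : Fin n // i ≠ u ∧ i ≠ v} with hS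
  have hB0 : ∀ j : S, A u (j : Fin n) = 0 := fun j => hA0 j j.2.1 j.2.2
  have hC0 : ∀ i : S, A (i : Fin n) u = 0 := fun i => by
    rw [hA.apply]; exact hB0 i
  let e : (Fin 2 ⊕ S) ≃ Fin n :=
  { toFun := Sum.elim ![u, v] Subtype.val
    invFun := fun i => if h1 : i = u then Sum.inl 0 else
      if h2 : i = v then Sum.inl 1 else Sum.inr ⟨i, h1, h2⟩
    left_inv := by
      rintro (x | ⟨i, hi1, hi2⟩)
      · fin_cases x <;> simp [Ne.symm huv]
      · simp [hi1, hi2]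
    right_inv := by
      intro i
      by_cases h1 : i = u
      · simp [h1]
      · by_cases h2 : i = v
        · simp [h1, h2, Ne.symm huv]
        · simp [h1, h2] }
  rw [← Matrix.det_submatrix_equiv_self e]
  have hblock : A.submatrix e e =
      Matrix.fromBlocks (A.submatrix (![u, v]) (![u, v]))
        (A.submatrix (![u, v]) (Subtype.val : S → Fin n))
        (A.submatrix (Subtype.val : S → Fin n) (![u, v]))
        (A.submatrix (Subtype.val : S → Fin n) (Subtype.val : S → Fin n)) := by
    ext (i | i) (j | j) <;> rfl
  set M := A.submatrix (![u, v]) (![u, v]) with hM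
  have hMval : M = !![0, 1; 1, A v v] := by
    ext i j
    fin_cases i <;> fin_cases j <;>
      simp [hM, huu, hAuv, hAvu]
  have hMr : M * !![-(A v v), 1; 1, 0] = 1 := by
    rw [hMval]; ext i j; fin_cases i <;> fin_cases j <;>
      simp [Matrix.mul_apply, Fin.sum_univ_two]
  have hMl : !![-(A v v), 1; 1, 0] * M = 1 := by
    rw [hMval]; ext i j; fin_cases i <;> fin_cases j <;>
      simp [Matrix.mul_apply, Fin.sum_univ_two]
  haveI : Invertible M := ⟨!![-(A v v), 1; 1, 0], hMl, hMr⟩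
  rw [hblock, Matrix.det_fromBlocks₁₁]
  have hschur : (A.submatrix (Subtype.val : S → Fin n) (![u, v])) * ⅟M *
      (A.submatrix (![u, v]) (Subtype.val : S → Fin n)) = 0 := by
    have hinv : ⅟M = !![-(A v v), 1; 1, 0] := invOf_eq_right_inv hMr
    ext i j
    simp only [Matrix.mul_apply, Fin.sum_univ_two]
    simp [hinv, hC0 i, hB0 j]
  have hdetM : M.det = -1 := by
    rw [hMval, Matrix.det_fin_two_of]; ring
  rw [hschur, hdetM, sub_zero, neg_one_mul]
end

section
/- Let A be an n×n symmetric matrix with integer entries, let u be an index with A(u,u) = ε where ε ∈ {1, −1}, and suppose the u-th row of A has exactly one nonzero off-diagonal entry, namely A(u,v) = A(v,u) = 1 for some v ≠ u. Let A' be the (n−1)×(n−1) matrix obtained from A by deleting row and column u and replacing the diagonal entry A(v,v) by A(v,v) − ε. Then det A = ε · det A'. -/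
/-- Neumann blow-down move of type (b): removing a degree-one vertex `u` of
weight `ε = ±1` and replacing the neighbor's diagonal entry `A v v` by
`A v v - ε` multiplies the determinant by `ε`. -/
theorem stmt_1 (n : ℕ) (A : Matrix (Fin n) (Fin n) ℤ) (hA : A.IsSymm)
    (u v : Fin n) (huv : u ≠ v) (ε : ℤ) (hε : ε = 1 ∨ ε = -1) (huu : A u u = ε)
    (hrow : ∀ j : Fin n, j ≠ u → (A u j ≠ 0 ↔ j = v))
    (hAuv : A u v = 1) (hAvu : A v u = 1) :
    A.det = ε * Matrix.det (Matrix.of fun i j : {i : Fin n // i ≠ u} =>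
      if (i : Fin n) = v ∧ (j : Fin n) = v then A v v - ε
      else A (i : Fin n) (j : Fin n)) := by
  classical
  have hvu : v ≠ u := huv.symm
  have hε2 : ε * ε = 1 := by rcases hε with h | h <;> simp [h]
  have hzero : ∀ j : Fin n, j ≠ u → j ≠ v → A u j = 0 := by
    intro j hju hjv
    by_contra h
    exact hjv ((hrow j hju).1 h)
  have hzero' : ∀ i : Fin n, i ≠ u → i ≠ v → A i u = 0 := by
    intro i hiu hiv
    have : A i u = A u i := by
      have := hA
      rw [Matrix.IsSymm] at this
      exact (congrFun (congrFun this u) i).symm ▸ by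
        simpa [Matrix.transpose_apply] using congrFun (congrFun this.symm u) i
    rw [this]
    exact hzero i hiu hiv
  set D : Matrix {i : Fin n // i ≠ u} {i : Fin n // i ≠ u} ℤ :=
    Matrix.of (fun i j : {i : Fin n // i ≠ u} =>
      if (i : Fin n) = v ∧ (j : Fin n) = v then A v v - ε
      else A (i : Fin n) (j : Fin n)) with hD
  set C : Matrix (Fin n) (Fin n) ℤ :=
    Matrix.transvection v u (-ε) * (A * Matrix.transvection u v (-ε)) with hC
  set M : Matrix (Fin n) (Fin n) ℤ := A * Matrix.transvection u v (-ε) with hM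
  -- entries of M
  have hMv : ∀ a, M a v = A a v - ε * A a u := by
    intro a; rw [hM, Matrix.mul_transvection_apply_same u v]; ring
  have hMo : ∀ a b, b ≠ v → M a b = A a b := by
    intro a b hb; rw [hM, Matrix.mul_transvection_apply_of_ne u v _ _ hb]
  -- entries of C
  have hCv : ∀ b, C v b = M v b - ε * M u b := by
    intro b; rw [hC, Matrix.transvection_mul_apply_same v u]; ring
  have hCo : ∀ a b, a ≠ v → C a b = M a b := by
    intro a b ha; rw [hC, Matrix.transvection_mul_apply_of_ne v u _ _ ha]
  have hdetC : C.det = A.det := by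
    rw [hC, Matrix.det_mul, Matrix.det_mul,
      Matrix.det_transvection_of_ne v u hvu, Matrix.det_transvection_of_ne u v huv]
    ring
  -- key entries of C
  have hCuu : C u u = ε := by
    rw [hCo u u huv, hMo u u huv, huu]
  have hCurow : ∀ j : Fin n, j ≠ u → C u j = 0 := by
    intro j hj
    rw [hCo u j huv]
    by_cases hjv : j = v
    · rw [hjv, hMv, huu, hAuv]
      linarith [hε2]
    · rw [hMo u j hjv]
      exact hzero j hj hjv
  have hCucol : ∀ i : Fin n, i ≠ u → C i u = 0 := by
    intro i hi
    by_cases hiv : i = v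
    · rw [hiv, hCv, hMo v u huv, hMo u u huv, hAvu, huu]
      linarith [hε2]
    · rw [hCo i u hiv, hMo i u huv]
      exact hzero' i hi hiv
  have hCrest : ∀ i j : Fin n, i ≠ u → j ≠ u →
      C i j = if i = v ∧ j = v then A v v - ε else A i j := by
    intro i j hi hj
    by_cases hiv : i = v
    · rw [hiv, hCv]
      by_cases hjv : j = v
      · rw [hjv, hMv, hMv, hAvu, huu, hAuv]
        simp only [and_self, if_pos]
        have h3 : ε * ε * ε = ε := by rw [hε2]; ring
        linarith [h3]
      · rw [hMo v j hjv, hMo u j hjv, hzero j hj hjv]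
        simp [hjv]
    · rw [hCo i j hiv]
      by_cases hjv : j = v
      · rw [hjv, hMv, hzero' i hi hiv]
        simp [hiv]
      · rw [hMo i j hjv]
        simp [hiv, hjv]
  -- reindex C as block matrix
  haveI : Unique {a : Fin n // a = u} :=
    ⟨⟨⟨u, rfl⟩⟩, fun x => Subtype.ext x.2⟩
  let e : {a : Fin n // a = u} ⊕ {a : Fin n // ¬a = u} ≃ Fin n :=
    Equiv.sumCompl (fun a => a = u)
  have hsub : C.submatrix e e =
      Matrix.fromBlocks (Matrix.of fun _ _ => ε) 0 0 D := by
    ext i j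
    cases i with
    | inl i =>
      cases j with
      | inl j =>
        simp only [Matrix.submatrix_apply, Matrix.fromBlocks_apply₁₁, Matrix.of_apply]
        show C (e (Sum.inl i)) (e (Sum.inl j)) = ε
        have hi : (e (Sum.inl i) : Fin n) = u := i.2
        have hj : (e (Sum.inl j) : Fin n) = u := j.2
        rw [show e (Sum.inl i) = i.1 from rfl, show e (Sum.inl j) = j.1 from rfl,
          i.2, j.2, hCuu]
      | inr j =>
        simp only [Matrix.submatrix_apply, Matrix.fromBlocks_apply₁₂, Matrix.zero_apply]
        show C (e (Sum.inl i)) (e (Sum.inr j)) = 0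
        rw [show e (Sum.inl i) = i.1 from rfl, show e (Sum.inr j) = j.1 from rfl, i.2]
        exact hCurow j.1 j.2
    | inr i =>
      cases j with
      | inl j =>
        simp only [Matrix.submatrix_apply, Matrix.fromBlocks_apply₂₁, Matrix.zero_apply]
        show C (e (Sum.inr i)) (e (Sum.inl j)) = 0
        rw [show e (Sum.inr i) = i.1 from rfl, show e (Sum.inl j) = j.1 from rfl, j.2]
        exact hCucol i.1 i.2
      | inr j =>
        simp only [Matrix.submatrix_apply, Matrix.fromBlocks_apply₂₂]
        show C (e (Sum.inr i)) (e (Sum.inr j)) = D i j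
        rw [show e (Sum.inr i) = i.1 from rfl, show e (Sum.inr j) = j.1 from rfl]
        rw [hCrest i.1 j.1 i.2 j.2]
        rfl
  have : C.det = ε * D.det := by
    rw [← Matrix.det_submatrix_equiv_self e C, hsub,
      Matrix.det_fromBlocks_zero₂₁, Matrix.det_unique]
    rfl
  rw [← hdetC, this, hD]
end
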